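/- arXiv:2311.05211 — 5 statements merged into one kernel-verified Lean document; each statement's English description precedes it below -/
import Mathlib

section
/- Let f : I → ℝ and g : J → ℝ be smooth functions on open intervals, let a ≠ 0, t₀ ∈ ℝ, and let φ : I → J be a diffeomorphism satisfying φ'(y)·f(y) = a·g(φ(y)) for all y ∈ I. Then the map Ψ(x,y) = (a·x + t₀, φ(y)) satisfies, for all p = (x,y) ∈ ℝ × I and all v, w ∈ ℝ², the identity B_g(Ψ(p))(dΨ_p v, dΨ_p w) = a·φ'(y)·B_f(p)(v,w); in particular the conformal factor of the pullback of the ribbon metric of R_g under Ψ is the nowhere-vanishing function a·φ'(y). -/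
open Set

/-- The ribbon metric `f(y)dx² + 2dxdy` of `R_f`, as a family of symmetric
bilinear forms on `ℝ²`. -/
def ribbonForm (f : ℝ → ℝ) (p : ℝ × ℝ) (v w : ℝ × ℝ) : ℝ :=
  f p.2 * v.1 * w.1 + v.1 * w.2 + v.2 * w.1

/-- If `φ : I → J` is a diffeomorphism with `φ'(y)·f(y) = a·g(φ(y))`, then the map
`Ψ(x,y) = (a·x + t₀, φ(y))` pulls back the ribbon metric of `R_g` to
`a·φ'(y)` times the ribbon metric of `R_f`, and this conformal factor is
nowhere vanishing. -/
theorem ribbon_pullback_conformal_factor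
    (I J : Set ℝ) (hIo : IsOpen I) (hIc : I.OrdConnected)
    (hJo : IsOpen J) (hJc : J.OrdConnected)
    (f g : ℝ → ℝ) (hf : ContDiffOn ℝ (⊤ : ℕ∞) f I) (hg : ContDiffOn ℝ (⊤ : ℕ∞) g J)
    (a t₀ : ℝ) (ha : a ≠ 0)
    (φ : ℝ → ℝ) (hφ : ContDiffOn ℝ (⊤ : ℕ∞) φ I) (hφbij : BijOn φ I J)
    (hφ' : ∀ y ∈ I, deriv φ y ≠ 0)
    (hconj : ∀ y ∈ I, deriv φ y * f y = a * g (φ y)) :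
    (∀ p ∈ (univ ×ˢ I : Set (ℝ × ℝ)), ∀ v w : ℝ × ℝ,
      ribbonForm g (a * p.1 + t₀, φ p.2)
          (fderiv ℝ (fun q : ℝ × ℝ => (a * q.1 + t₀, φ q.2)) p v)
          (fderiv ℝ (fun q : ℝ × ℝ => (a * q.1 + t₀, φ q.2)) p w)
        = (a * deriv φ p.2) * ribbonForm f p v w) ∧
    (∀ y ∈ I, a * deriv φ y ≠ 0) := by
  constructor
  · rintro p hp v w
    have hy : p.2 ∈ I := hp.2
    have hφd : HasDerivAt φ (deriv φ p.2) p.2 :=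
      ((hφ.contDiffAt (hIo.mem_nhds hy)).differentiableAt (by simp)).hasDerivAt
    have h1 : HasFDerivAt (fun q : ℝ × ℝ => a * q.1 + t₀)
        (a • ContinuousLinearMap.fst ℝ ℝ ℝ) p :=
      ((hasFDerivAt_fst).const_mul a).add_const t₀
    have h2 : HasFDerivAt (fun q : ℝ × ℝ => φ q.2)
        ((deriv φ p.2) • ContinuousLinearMap.snd ℝ ℝ ℝ) p :=
      hφd.comp_hasFDerivAt p hasFDerivAt_snd
    have hF : HasFDerivAt (fun q : ℝ × ℝ => (a * q.1 + t₀, φ q.2))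
        ((a • ContinuousLinearMap.fst ℝ ℝ ℝ).prod
          ((deriv φ p.2) • ContinuousLinearMap.snd ℝ ℝ ℝ)) p := HasFDerivAt.prodMk h1 h2
    rw [hF.fderiv]
    simp only [ribbonForm, ContinuousLinearMap.prod_apply, ContinuousLinearMap.smul_apply,
      ContinuousLinearMap.coe_fst', ContinuousLinearMap.coe_snd', smul_eq_mul]
    have hc := hconj p.2 hy
    linear_combination (-(a * v.1 * w.1)) * hc
  · intro y hy
    exact mul_ne_zero ha (hφ' y hy)
end

section
/- Let f : ℝ → ℝ be a smooth function whose vector field f(t)∂_t is complete, with flow φ : ℝ × ℝ → ℝ (i.e. φ(0,y) = y and ∂_s φ(s,y) = f(φ(s,y)) for all s, y). Then for every s ∈ ℝ the map Ψ_s(x,y) = (x, φ(s,y)) is a diffeomorphism of ℝ² satisfying dΨ_s(1,0) = (1,0) and, for all p = (x,y) and all v, w ∈ ℝ², B_f(Ψ_s(p))(d(Ψ_s)_p v, d(Ψ_s)_p w) = (∂_y φ)(s,y)·B_f(p)(v,w); that is, Ψ_s is a K-conformal diffeomorphism of the ribbon R_f. -/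
open Set

/-- If the vector field `f(t)∂_t` is complete with flow `φ`, then for every time `s`
the map `Ψ_s(x,y) = (x, φ(s,y))` is a K-conformal diffeomorphism of the ribbon `R_f`:
it is a smooth bijection fixing the Killing field `∂_x`, and it multiplies the ribbon
metric by the conformal factor `∂_y φ(s,y)`. -/
theorem flow_is_K_conformal
    (f : ℝ → ℝ) (hf : ContDiff ℝ (⊤ : ℕ∞) f)
    (φ : ℝ → ℝ → ℝ) (hφsm : ContDiff ℝ (⊤ : ℕ∞) (fun p : ℝ × ℝ => φ p.1 p.2))
    (hφ0 : ∀ y : ℝ, φ 0 y = y)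
    (hflow : ∀ s y : ℝ, HasDerivAt (fun u => φ u y) (f (φ s y)) s) :
    ∀ s : ℝ,
      Function.Bijective (fun p : ℝ × ℝ => (p.1, φ s p.2)) ∧
      ContDiff ℝ (⊤ : ℕ∞) (fun p : ℝ × ℝ => (p.1, φ s p.2)) ∧
      (∀ p : ℝ × ℝ,
        fderiv ℝ (fun q : ℝ × ℝ => (q.1, φ s q.2)) p (1, 0) = ((1 : ℝ), (0 : ℝ))) ∧
      (∀ p : ℝ × ℝ, deriv (φ s) p.2 ≠ 0) ∧
      (∀ p : ℝ × ℝ, ∀ v w : ℝ × ℝ,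
        ribbonForm f (p.1, φ s p.2)
            (fderiv ℝ (fun q : ℝ × ℝ => (q.1, φ s q.2)) p v)
            (fderiv ℝ (fun q : ℝ × ℝ => (q.1, φ s q.2)) p w)
          = deriv (φ s) p.2 * ribbonForm f p v w) := by
  have hΦd : Differentiable ℝ (fun p : ℝ × ℝ => φ p.1 p.2) := hφsm.differentiable (by simp)
  set A : ℝ × ℝ → (ℝ × ℝ →L[ℝ] ℝ) :=
    fun p => fderiv ℝ (fun p : ℝ × ℝ => φ p.1 p.2) p with hAdef
  have hA : ContDiff ℝ (⊤ : ℕ∞) A := hφsm.fderiv_right (m := (⊤ : ℕ∞)) (by simp)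
  have hline : ∀ y s : ℝ, HasDerivAt (fun u : ℝ => (u, y)) ((1:ℝ), (0:ℝ)) s :=
    fun y s => (hasDerivAt_id s).prodMk (hasDerivAt_const s y)
  -- `∂_s φ = f ∘ φ`
  have fact1 : ∀ p : ℝ × ℝ, A p ((1:ℝ), (0:ℝ)) = f (φ p.1 p.2) := by
    intro p
    have h1 : HasDerivAt (fun u : ℝ => φ u p.2) (A p ((1:ℝ), (0:ℝ))) p.1 := by
      simpa [Function.comp_def] using (hΦd p).hasFDerivAt.comp_hasDerivAt p.1 (hline p.2 p.1)
    exact h1.unique (hflow p.1 p.2)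
  -- `∂_y φ`
  have fact2 : ∀ s y : ℝ, HasDerivAt (φ s) (A (s, y) ((0:ℝ), (1:ℝ))) y := by
    intro s y
    have h1 : HasDerivAt (fun t : ℝ => (s, t)) ((0:ℝ), (1:ℝ)) y :=
      (hasDerivAt_const y s).prodMk (hasDerivAt_id y)
    simpa [Function.comp_def] using (hΦd (s, y)).hasFDerivAt.comp_hasDerivAt y h1
  -- the linearized ODE `∂_s ∂_y φ = f'(φ) ∂_y φ` via symmetry of second derivatives
  have fact3 : ∀ s y : ℝ, HasDerivAt (fun u : ℝ => A (u, y) ((0:ℝ), (1:ℝ)))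
      (deriv f (φ s y) * A (s, y) ((0:ℝ), (1:ℝ))) s := by
    intro s y
    have hBd : HasFDerivAt A (fderiv ℝ A (s, y)) (s, y) :=
      ((hA.differentiable (by simp)) (s, y)).hasFDerivAt
    set B := fderiv ℝ A (s, y) with hBdef
    have hsymm : B ((1:ℝ), (0:ℝ)) ((0:ℝ), (1:ℝ)) = B ((0:ℝ), (1:ℝ)) ((1:ℝ), (0:ℝ)) :=
      second_derivative_symmetric (fun q => (hΦd q).hasFDerivAt) hBd _ _
    have hAu : HasDerivAt (fun u : ℝ => A (u, y)) (B ((1:ℝ), (0:ℝ))) s := by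
      simpa [Function.comp_def] using hBd.comp_hasDerivAt s (hline y s)
    have h1 : HasDerivAt (fun u : ℝ => A (u, y) ((0:ℝ), (1:ℝ)))
        (B ((1:ℝ), (0:ℝ)) ((0:ℝ), (1:ℝ))) s := by
      simpa using hAu.clm_apply (hasDerivAt_const s ((0:ℝ), (1:ℝ)))
    have hg1 : HasFDerivAt (fun q : ℝ × ℝ => A q ((1:ℝ), (0:ℝ)))
        ((ContinuousLinearMap.apply ℝ ℝ ((1:ℝ), (0:ℝ))).comp B) (s, y) :=
      (ContinuousLinearMap.apply ℝ ℝ ((1:ℝ), (0:ℝ))).hasFDerivAt.comp (s, y) hBd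
    have hg2 : HasFDerivAt (fun q : ℝ × ℝ => f (φ q.1 q.2))
        (deriv f (φ s y) • A (s, y)) (s, y) :=
      ((hf.differentiable (by simp)) (φ s y)).hasDerivAt.comp_hasFDerivAt (s, y)
        (hΦd (s, y)).hasFDerivAt
    have heq : (fun q : ℝ × ℝ => A q ((1:ℝ), (0:ℝ))) = fun q : ℝ × ℝ => f (φ q.1 q.2) :=
      funext fact1
    rw [heq] at hg1
    have huniq := hg1.unique hg2
    have hB01 : B ((0:ℝ), (1:ℝ)) ((1:ℝ), (0:ℝ)) = deriv f (φ s y) * A (s, y) ((0:ℝ), (1:ℝ)) := by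
      have := congrArg (fun (L : (ℝ × ℝ) →L[ℝ] ℝ) => L ((0:ℝ), (1:ℝ))) huniq
      simpa using this
    rw [hsymm, hB01] at h1
    exact h1
  -- continuity and FTC for `f' ∘ φ`
  have hc : ∀ y : ℝ, Continuous (fun u : ℝ => deriv f (φ u y)) := by
    intro y
    exact (hf.continuous_deriv (by simp)).comp
      (hφsm.continuous.comp (continuous_id.prodMk continuous_const))
  have hC : ∀ y u : ℝ, HasDerivAt (fun t : ℝ => ∫ r in (0:ℝ)..t, deriv f (φ r y))
      (deriv f (φ u y)) u := by
    intro y u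
    exact intervalIntegral.integral_hasDerivAt_right ((hc y).intervalIntegrable _ _)
      ((hc y).aestronglyMeasurable.stronglyMeasurableAtFilter)
      (hc y).continuousAt
  have hA0 : ∀ y : ℝ, A ((0:ℝ), y) ((0:ℝ), (1:ℝ)) = 1 := by
    intro y
    have h2 : HasDerivAt (φ 0) 1 y := by
      have h3 : φ 0 = fun t : ℝ => t := funext hφ0
      rw [h3]; exact hasDerivAt_id y
    exact (fact2 0 y).unique h2
  -- the conformal factor is an exponential
  have hDexp : ∀ s y : ℝ, A (s, y) ((0:ℝ), (1:ℝ))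
      = Real.exp (∫ r in (0:ℝ)..s, deriv f (φ r y)) := by
    intro s y
    set C : ℝ → ℝ := fun t => ∫ r in (0:ℝ)..t, deriv f (φ r y) with hCdef
    have hg : ∀ u : ℝ, HasDerivAt
        (fun t : ℝ => A (t, y) ((0:ℝ), (1:ℝ)) * Real.exp (-(C t))) 0 u := by
      intro u
      have h2 : HasDerivAt (fun t : ℝ => Real.exp (-(C t)))
          (Real.exp (-(C u)) * (-(deriv f (φ u y)))) u := ((hC y u).neg).exp
      have h3 := (fact3 u y).mul h2
      refine h3.congr_deriv ?_
      ring
    have hconst := is_const_of_deriv_eq_zero (fun x => (hg x).differentiableAt)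
      (fun x => (hg x).deriv) s 0
    have hC0 : C 0 = 0 := intervalIntegral.integral_same
    rw [hC0, hA0 y] at hconst
    have hone : A (s, y) ((0:ℝ), (1:ℝ)) * Real.exp (-(C s)) = 1 := by
      simpa using hconst
    have := congrArg (fun t : ℝ => t * Real.exp (C s)) hone
    simpa [mul_assoc, ← Real.exp_add] using this
  -- the commutation identity `f(φ(s,y)) = ∂_y φ(s,y) · f(y)`
  have hcomm : ∀ s y : ℝ, f (φ s y) = A (s, y) ((0:ℝ), (1:ℝ)) * f y := by
    intro s y
    set C : ℝ → ℝ := fun t => ∫ r in (0:ℝ)..t, deriv f (φ r y) with hCdef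
    have hg : ∀ u : ℝ, HasDerivAt
        (fun t : ℝ => (A (t, y) ((0:ℝ), (1:ℝ)) * f y - f (φ t y)) * Real.exp (-(C t))) 0 u := by
      intro u
      have h1 := (fact3 u y).mul_const (f y)
      have h2 : HasDerivAt (fun t : ℝ => f (φ t y)) (deriv f (φ u y) * f (φ u y)) u :=
        ((hf.differentiable (by simp)) (φ u y)).hasDerivAt.comp u (hflow u y)
      have h4 : HasDerivAt (fun t : ℝ => Real.exp (-(C t)))
          (Real.exp (-(C u)) * (-(deriv f (φ u y)))) u := ((hC y u).neg).exp
      have h3 := (h1.sub h2).mul h4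
      refine h3.congr_deriv ?_
      simp only [Pi.sub_apply]
      ring
    have hconst := is_const_of_deriv_eq_zero (fun x => (hg x).differentiableAt)
      (fun x => (hg x).deriv) s 0
    have hC0 : C 0 = 0 := intervalIntegral.integral_same
    rw [hC0, hA0 y, hφ0 y] at hconst
    have hzero : (A (s, y) ((0:ℝ), (1:ℝ)) * f y - f (φ s y)) * Real.exp (-(C s)) = 0 := by
      simpa using hconst
    have hsub : A (s, y) ((0:ℝ), (1:ℝ)) * f y - f (φ s y) = 0 :=
      (mul_eq_zero.1 hzero).resolve_right (Real.exp_ne_zero _)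
    linarith [hsub]
  -- the flow inverse
  have hinv : ∀ s y : ℝ, φ (-s) (φ s y) = y := by
    intro s y
    have hk : ∀ u : ℝ, HasDerivAt (fun t : ℝ => φ (-t) (φ t y)) 0 u := by
      intro u
      have hγ : HasDerivAt (fun t : ℝ => ((-t : ℝ), φ t y)) ((-1:ℝ), f (φ u y)) u :=
        ((hasDerivAt_id u).neg).prodMk (hflow u y)
      have hk1 : HasDerivAt (fun t : ℝ => φ (-t) (φ t y))
          (A (-u, φ u y) ((-1:ℝ), f (φ u y))) u := by
        simpa [Function.comp_def] using (hΦd (-u, φ u y)).hasFDerivAt.comp_hasDerivAt u hγ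
      have hz : A (-u, φ u y) ((-1:ℝ), f (φ u y)) = 0 := by
        have hdecomp : ((-1:ℝ), f (φ u y)) = f (φ u y) • ((0:ℝ), (1:ℝ)) - ((1:ℝ), (0:ℝ)) := by
          simp [Prod.ext_iff]
        rw [hdecomp, map_sub, map_smul, fact1 (-u, φ u y)]
        have h5 := hcomm (-u) (φ u y)
        simp only [smul_eq_mul]
        rw [h5]
        ring
      rw [hz] at hk1
      exact hk1
    have hconst := is_const_of_deriv_eq_zero (fun x => (hk x).differentiableAt)
      (fun x => (hk x).deriv) s 0
    simpa [hφ0] using hconst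
  intro s
  -- the fderiv of `Ψ_s`
  have hΨ : ∀ p : ℝ × ℝ, HasFDerivAt (fun q : ℝ × ℝ => (q.1, φ s q.2))
      ((ContinuousLinearMap.fst ℝ ℝ ℝ).prod
        (A (s, p.2) ((0:ℝ), (1:ℝ)) • ContinuousLinearMap.snd ℝ ℝ ℝ)) p := by
    intro p
    exact (hasFDerivAt_fst).prodMk
      ((fact2 s p.2).comp_hasFDerivAt p (hasFDerivAt_snd))
  refine ⟨?_, ?_, ?_, ?_, ?_⟩
  · -- bijectivity
    have hleft : Function.LeftInverse (fun p : ℝ × ℝ => (p.1, φ (-s) p.2))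
        (fun p : ℝ × ℝ => (p.1, φ s p.2)) := by
      intro p; simp [hinv s p.2]
    have hright : Function.RightInverse (fun p : ℝ × ℝ => (p.1, φ (-s) p.2))
        (fun p : ℝ × ℝ => (p.1, φ s p.2)) := by
      intro p
      have h6 := hinv (-s) p.2
      rw [neg_neg] at h6
      simp [h6]
    exact ⟨hleft.injective, hright.surjective⟩
  · -- smoothness
    exact contDiff_fst.prodMk (hφsm.comp (contDiff_const.prodMk contDiff_snd))
  · -- fixes the Killing field
    intro p
    rw [(hΨ p).fderiv]
    simp
  · -- nonvanishing conformal factor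
    intro p
    rw [(fact2 s p.2).deriv, hDexp s p.2]
    exact Real.exp_ne_zero _
  · -- conformality
    intro p v w
    rw [(hΨ p).fderiv, (fact2 s p.2).deriv]
    simp only [ContinuousLinearMap.prod_apply, ContinuousLinearMap.coe_fst',
      ContinuousLinearMap.smul_apply, ContinuousLinearMap.coe_snd', smul_eq_mul]
    simp only [ribbonForm]
    rw [hcomm s p.2]
    ring
end

section
/- Let f : I → ℝ be a smooth nowhere-vanishing function on an open interval I and let F : I → ℝ be a primitive of −1/f (i.e. F'(y) = −1/f(y) for all y ∈ I). Then the generic reflection σ(x,y) = (2F(y) − x, y) is an involutive isometry of the strip ℝ × I with the ribbon metric: σ ∘ σ = id and, for all p ∈ ℝ × I and all v, w ∈ ℝ², B_f(σ(p))(dσ_p v, dσ_p w) = B_f(p)(v,w). -/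
open Set

/-- If `f` is nowhere vanishing on the open interval `I` and `F` is a primitive of
`-1/f`, then the generic reflection `σ(x,y) = (2F(y) - x, y)` is an involutive
isometry of the strip `ℝ × I` with the ribbon metric. -/
theorem generic_reflection_isometry
    (I : Set ℝ) (hIo : IsOpen I) (hIc : I.OrdConnected)
    (f : ℝ → ℝ) (hf : ContDiffOn ℝ (⊤ : ℕ∞) f I) (hf0 : ∀ y ∈ I, f y ≠ 0)
    (F : ℝ → ℝ) (hF : ∀ y ∈ I, HasDerivAt F (-(1 / f y)) y) :
    (∀ p ∈ (univ ×ˢ I : Set (ℝ × ℝ)),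
      (fun q : ℝ × ℝ => (2 * F q.2 - q.1, q.2))
        ((fun q : ℝ × ℝ => (2 * F q.2 - q.1, q.2)) p) = p) ∧
    (∀ p ∈ (univ ×ˢ I : Set (ℝ × ℝ)), ∀ v w : ℝ × ℝ,
      ribbonForm f (2 * F p.2 - p.1, p.2)
          (fderiv ℝ (fun q : ℝ × ℝ => (2 * F q.2 - q.1, q.2)) p v)
          (fderiv ℝ (fun q : ℝ × ℝ => (2 * F q.2 - q.1, q.2)) p w)
        = ribbonForm f p v w) := by
  constructor
  · intro p hp
    simp only
    ext <;> simp <;> ring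
  · intro p hp v w
    have hp2 : p.2 ∈ I := hp.2
    have hFd : HasDerivAt F (-(1 / f p.2)) p.2 := hF p.2 hp2
    have h1 : HasFDerivAt (fun q : ℝ × ℝ => F q.2)
        ((-(1 / f p.2)) • ContinuousLinearMap.snd ℝ ℝ ℝ) p :=
      hFd.comp_hasFDerivAt p (hasFDerivAt_snd)
    have h2 : HasFDerivAt (fun q : ℝ × ℝ => (2 * F q.2 - q.1, q.2))
        (((2 : ℝ) • ((-(1 / f p.2)) • ContinuousLinearMap.snd ℝ ℝ ℝ)
          - ContinuousLinearMap.fst ℝ ℝ ℝ).prod (ContinuousLinearMap.snd ℝ ℝ ℝ)) p :=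
      HasFDerivAt.prodMk ((h1.const_mul 2).sub (hasFDerivAt_fst)) hasFDerivAt_snd
    rw [h2.fderiv]
    have hne := hf0 p.2 hp2
    simp only [ribbonForm, ContinuousLinearMap.prod_apply, ContinuousLinearMap.sub_apply,
      ContinuousLinearMap.smul_apply, ContinuousLinearMap.coe_fst', ContinuousLinearMap.coe_snd',
      smul_eq_mul]
    field_simp
    ring
end

section
/- Let λ ≠ 0 and let I₀ ⊆ ℝ be an open interval. Define Φ₀ : ℝ × I₀ → ℝ² by Φ₀(x,y) = (y·e^{λx/2}, e^{−λx/2}). Then Φ₀ is a diffeomorphism onto the half-saddle {(u,v) ∈ ℝ² : v > 0 and uv ∈ I₀}, and for f₀(y) = λ·y and the constant symmetric bilinear form C((a₁,a₂),(b₁,b₂)) = −(2/λ)·(a₁·b₂ + a₂·b₁) on ℝ² one has, for all p ∈ ℝ × I₀ and all v, w ∈ ℝ²: C(d(Φ₀)_p v, d(Φ₀)_p w) = B_{f₀}(p)(v,w); moreover d(Φ₀)_p(1,0) = (λ/2)·(u, −v) where (u,v) = Φ₀(p). -/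
open Set

lemma innerlin_aux (l : ℝ) (p : ℝ × ℝ) :
    HasFDerivAt (fun q : ℝ × ℝ => l * q.1 / 2)
      ((l / 2) • ContinuousLinearMap.fst ℝ ℝ ℝ) p := by
  have h : (fun q : ℝ × ℝ => l * q.1 / 2)
      = fun q => ((l / 2) • ContinuousLinearMap.fst ℝ ℝ ℝ) q := by
    funext q; simp; ring
  rw [h]
  exact ((l / 2) • ContinuousLinearMap.fst ℝ ℝ ℝ).hasFDerivAt

lemma innerlin2_aux (l : ℝ) (p : ℝ × ℝ) :
    HasFDerivAt (fun q : ℝ × ℝ => -(l * q.1) / 2)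
      ((-(l / 2)) • ContinuousLinearMap.fst ℝ ℝ ℝ) p := by
  have h : (fun q : ℝ × ℝ => -(l * q.1) / 2)
      = fun q => ((-(l / 2)) • ContinuousLinearMap.fst ℝ ℝ ℝ) q := by
    funext q; simp; ring
  rw [h]
  exact ((-(l / 2)) • ContinuousLinearMap.fst ℝ ℝ ℝ).hasFDerivAt

lemma phider_aux (l : ℝ) (p : ℝ × ℝ) :
    HasFDerivAt (fun q : ℝ × ℝ => (q.2 * Real.exp (l * q.1 / 2), Real.exp (-(l * q.1) / 2)))
      ((ContinuousLinearMap.prod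
        (p.2 • (Real.exp (l * p.1 / 2) • ((l / 2) • ContinuousLinearMap.fst ℝ ℝ ℝ))
          + Real.exp (l * p.1 / 2) • ContinuousLinearMap.snd ℝ ℝ ℝ)
        (Real.exp (-(l * p.1) / 2) • ((-(l / 2)) • ContinuousLinearMap.fst ℝ ℝ ℝ)))) p :=
  (hasFDerivAt_snd.mul ((innerlin_aux l p).exp)).prodMk ((innerlin2_aux l p).exp)

lemma fderiv_phi_aux (l : ℝ) (p : ℝ × ℝ) (v : ℝ × ℝ) :
    fderiv ℝ (fun q : ℝ × ℝ => (q.2 * Real.exp (l * q.1 / 2), Real.exp (-(l * q.1) / 2))) p v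
    = (p.2 * (l / 2) * Real.exp (l * p.1 / 2) * v.1 + Real.exp (l * p.1 / 2) * v.2,
       -(l / 2) * Real.exp (-(l * p.1) / 2) * v.1) := by
  rw [(phider_aux l p).fderiv]
  simp [ContinuousLinearMap.prod_apply]
  constructor <;> ring

lemma exp_mul_aux (l : ℝ) (x : ℝ) :
    Real.exp (l * x / 2) * Real.exp (-(l * x) / 2) = 1 := by
  have h : l * x / 2 + -(l * x) / 2 = 0 := by ring
  rw [← Real.exp_add, h, Real.exp_zero]

/-- The map `Φ₀(x,y) = (y·e^{λx/2}, e^{-λx/2})` is a diffeomorphism from the domino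
`ℝ × I₀` with the ribbon metric of `f₀(y) = λ·y` onto the half-saddle
`{(u,v) : v > 0, uv ∈ I₀}` with the constant metric `-(2/λ)·2dudv`, and it sends the
Killing field `∂_x` to `(λ/2)(u∂_u - v∂_v)`. -/
theorem linear_domino_embeds_in_flat_saddle
    (l : ℝ) (hl : l ≠ 0) (I₀ : Set ℝ) (hIo : IsOpen I₀) (hIc : I₀.OrdConnected) :
    BijOn (fun p : ℝ × ℝ => (p.2 * Real.exp (l * p.1 / 2), Real.exp (-(l * p.1) / 2)))
        (univ ×ˢ I₀) {q : ℝ × ℝ | 0 < q.2 ∧ q.1 * q.2 ∈ I₀} ∧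
    ContDiff ℝ (⊤ : ℕ∞)
      (fun p : ℝ × ℝ => (p.2 * Real.exp (l * p.1 / 2), Real.exp (-(l * p.1) / 2))) ∧
    (∃ Θ : ℝ × ℝ → ℝ × ℝ,
      ContDiffOn ℝ (⊤ : ℕ∞) Θ {q : ℝ × ℝ | 0 < q.2 ∧ q.1 * q.2 ∈ I₀} ∧
      ∀ p ∈ (univ ×ˢ I₀ : Set (ℝ × ℝ)),
        Θ ((fun p : ℝ × ℝ =>
          (p.2 * Real.exp (l * p.1 / 2), Real.exp (-(l * p.1) / 2))) p) = p) ∧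
    (∀ p ∈ (univ ×ˢ I₀ : Set (ℝ × ℝ)), ∀ v w : ℝ × ℝ,
      -(2 / l) *
          ((fderiv ℝ (fun q : ℝ × ℝ =>
              (q.2 * Real.exp (l * q.1 / 2), Real.exp (-(l * q.1) / 2))) p v).1 *
            (fderiv ℝ (fun q : ℝ × ℝ =>
              (q.2 * Real.exp (l * q.1 / 2), Real.exp (-(l * q.1) / 2))) p w).2 +
          (fderiv ℝ (fun q : ℝ × ℝ =>
              (q.2 * Real.exp (l * q.1 / 2), Real.exp (-(l * q.1) / 2))) p v).2 *
            (fderiv ℝ (fun q : ℝ × ℝ =>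
              (q.2 * Real.exp (l * q.1 / 2), Real.exp (-(l * q.1) / 2))) p w).1)
        = ribbonForm (fun y => l * y) p v w) ∧
    (∀ p : ℝ × ℝ,
      fderiv ℝ (fun q : ℝ × ℝ =>
          (q.2 * Real.exp (l * q.1 / 2), Real.exp (-(l * q.1) / 2))) p (1, 0)
        = (l / 2) • ((p.2 * Real.exp (l * p.1 / 2) : ℝ),
            (-Real.exp (-(l * p.1) / 2) : ℝ))) := by
  have hmem : ∀ p : ℝ × ℝ, p ∈ (univ ×ˢ I₀ : Set (ℝ × ℝ)) ↔ p.2 ∈ I₀ := by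
    intro p; simp [Set.mem_prod]
  refine ⟨?_, ?_, ?_, ?_, ?_⟩
  · -- BijOn
    refine Set.InvOn.bijOn (f' := fun q : ℝ × ℝ => (-(2 / l) * Real.log q.2, q.1 * q.2))
      ⟨?_, ?_⟩ ?_ ?_
    · intro p hp
      have h1 : Real.log (Real.exp (-(l * p.1) / 2)) = -(l * p.1) / 2 := Real.log_exp _
      simp only []
      rw [h1]
      have : p.2 * Real.exp (l * p.1 / 2) * Real.exp (-(l * p.1) / 2) = p.2 := by
        rw [mul_assoc, exp_mul_aux]; ring
      rw [this]
      have : -(2 / l) * (-(l * p.1) / 2) = p.1 := by field_simp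
      rw [this]
    · intro q hq
      obtain ⟨hv, -⟩ := hq
      have hln : l * (-(2 / l) * Real.log q.2) / 2 = -Real.log q.2 := by field_simp
      have hln2 : -(l * (-(2 / l) * Real.log q.2)) / 2 = Real.log q.2 := by field_simp
      simp only []
      rw [hln, hln2, Real.exp_log hv, Real.exp_neg, Real.exp_log hv]
      have : q.1 * q.2 * q.2⁻¹ = q.1 := by field_simp
      rw [this]
    · intro p hp
      refine ⟨Real.exp_pos _, ?_⟩
      have : p.2 * Real.exp (l * p.1 / 2) * Real.exp (-(l * p.1) / 2) = p.2 := by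
        rw [mul_assoc, exp_mul_aux]; ring
      simpa [this] using (hmem p).mp hp
    · intro q hq
      rw [hmem]
      exact hq.2
  · -- smoothness
    refine ContDiff.prodMk ?_ ?_
    · exact contDiff_snd.mul ((Real.contDiff_exp.comp
        ((contDiff_const.mul contDiff_fst).div_const 2)))
    · exact Real.contDiff_exp.comp (((contDiff_const.mul contDiff_fst).neg).div_const 2)
  · -- inverse
    refine ⟨fun q : ℝ × ℝ => (-(2 / l) * Real.log q.2, q.1 * q.2), ?_, ?_⟩
    · refine ContDiffOn.prodMk ?_ ?_
      · refine ContDiffOn.mul contDiffOn_const ?_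
        refine Real.contDiffOn_log.comp contDiff_snd.contDiffOn ?_
        intro q hq
        exact ne_of_gt hq.1
      · exact (contDiff_fst.mul contDiff_snd).contDiffOn
    · intro p hp
      have h1 : Real.log (Real.exp (-(l * p.1) / 2)) = -(l * p.1) / 2 := Real.log_exp _
      simp only []
      rw [h1]
      have h2 : p.2 * Real.exp (l * p.1 / 2) * Real.exp (-(l * p.1) / 2) = p.2 := by
        rw [mul_assoc, exp_mul_aux]; ring
      rw [h2]
      have : -(2 / l) * (-(l * p.1) / 2) = p.1 := by field_simp
      rw [this]
  · -- metric
    intro p hp v w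
    rw [fderiv_phi_aux, fderiv_phi_aux]
    have hE := exp_mul_aux l p.1
    have hE2 : Real.exp (l * p.1 / 2) * Real.exp (-(l * p.1 / 2)) = 1 := by rw [← Real.exp_add]; simp
    unfold ribbonForm
    simp only []
    field_simp
    linear_combination (2 * (l * p.2 * v.1 * w.1 + v.1 * w.2 + v.2 * w.1)) * hE2
  · -- Killing field
    intro p
    rw [fderiv_phi_aux]
    simp only [Prod.smul_mk, smul_eq_mul, Prod.mk.injEq]
    constructor <;> ring
end

section
/- For b ∈ (−1,1) let f_b : ℝ → ℝ be the 2π-periodic smooth function f_b(t) = sin(t)·(1 + b·sin(t)); its zeros in [0,2π) are 0 and π and they are simple. Then the map b ↦ μ(X_{f_b,2π}) = lim_{ε→0⁺} ( ∫_ε^{π−ε} dt/f_b(t) + ∫_{π+ε}^{2π−ε} dt/f_b(t) ) is a surjection from (−1,1) onto ℝ: for every r ∈ ℝ there exists b ∈ (−1,1) with μ(X_{f_b,2π}) = r. -/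
/-!
Partial fractions give `1 / (sin t (1 + b sin t)) = 1 / sin t - b / (1 + b sin t)`. The
`1 / sin t` parts of the two integrals cancel under `t ↦ 2π - t`, so the limit is
`-∫₀^{2π} b / (1 + b sin t) = -2πb / √(1 - b²)`, by the substitution `u = tan (t / 2)`.
This is a bijection from `(-1, 1)` onto `ℝ`, and `b = -r / √(4π² + r²)` is the preimage of `r`.
-/

open Set Filter Real Topology MeasureTheory intervalIntegral

theorem intervalIntegral.tendsto_integral_add_sub {E : Type*} [NormedAddCommGroup E]
    [NormedSpace ℝ E] {g : ℝ → E} (hg : Continuous g) (a b : ℝ) :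
    Tendsto (fun ε => ∫ t in (a + ε)..(b - ε), g t) (𝓝 0) (𝓝 (∫ t in a..b, g t)) := by
  have hint : ∀ x y, IntervalIntegrable g volume x y := hg.intervalIntegrable
  have hsub : ∀ ε, ∫ t in (a + ε)..(b - ε), g t =
      (∫ t in a..(b - ε), g t) - ∫ t in a..(a + ε), g t := fun ε =>
    (integral_interval_sub_left (hint _ _) (hint _ _)).symm
  have hprim := continuous_primitive hint a
  have hcont : Continuous fun ε : ℝ => (∫ t in a..(b - ε), g t) - ∫ t in a..(a + ε), g t := by
    fun_prop
  simpa [hsub] using hcont.tendsto 0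

lemma one_add_mul_sin_pos {b : ℝ} (hb : |b| < 1) (t : ℝ) : 0 < 1 + b * sin t := by
  have : |b * sin t| < 1 := by
    rw [abs_mul]
    exact (mul_le_of_le_one_right (abs_nonneg b) (abs_sin_le_one t)).trans_lt hb
  linarith [neg_abs_le (b * sin t)]

lemma continuous_div_one_add_mul_sin {b : ℝ} (hb : |b| < 1) (a : ℝ) :
    Continuous fun t => a / (1 + b * sin t) :=
  continuous_const.div (by fun_prop) fun t => (one_add_mul_sin_pos hb t).ne'

lemma tendsto_tan_half_nhdsLT_pi : Tendsto (fun s => tan (s / 2)) (𝓝[<] π) atTop := by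
  refine tendsto_tan_pi_div_two.comp (tendsto_nhdsWithin_iff.2 ⟨?_, ?_⟩)
  · exact tendsto_nhdsWithin_of_tendsto_nhds (tendsto_id.div_const 2)
  · filter_upwards [self_mem_nhdsWithin] with s (hs : s < π)
    exact mem_Iio.2 (by linarith)

lemma tendsto_tan_half_nhdsGT_neg_pi : Tendsto (fun s => tan (s / 2)) (𝓝[>] (-π)) atBot := by
  refine tendsto_tan_neg_pi_div_two.comp (tendsto_nhdsWithin_iff.2 ⟨?_, ?_⟩)
  · rw [← neg_div]
    exact tendsto_nhdsWithin_of_tendsto_nhds (tendsto_id.div_const 2)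
  · filter_upwards [self_mem_nhdsWithin] with s (hs : -π < s)
    exact mem_Ioi.2 (by linarith)

section HalfAngle

variable {b : ℝ} (hb : |b| < 1)

noncomputable def halfAngleAntideriv (b t : ℝ) : ℝ :=
  2 / √(1 - b ^ 2) * arctan ((b + tan (t / 2)) / √(1 - b ^ 2))

include hb

lemma sqrt_one_sub_sq_pos : 0 < √(1 - b ^ 2) := by
  have := sq_lt_one_iff_abs_lt_one b |>.2 hb
  exact sqrt_pos.2 (by linarith)

lemma hasDerivAt_halfAngleAntideriv {t : ℝ} (ht : t ∈ Ioo (-π) π) :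
    HasDerivAt (halfAngleAntideriv b) (1 / (1 + b * sin t)) t := by
  set c := √(1 - b ^ 2)
  have hc : 0 < c := sqrt_one_sub_sq_pos hb
  have hc2 : c ^ 2 = 1 - b ^ 2 := sq_sqrt (by nlinarith [sq_lt_one_iff_abs_lt_one b |>.2 hb])
  have hcos : cos (t / 2) ≠ 0 :=
    (cos_pos_of_mem_Ioo ⟨by linarith [ht.1], by linarith [ht.2]⟩).ne'
  have hu : HasDerivAt (fun s => tan (s / 2)) ((1 + tan (t / 2) ^ 2) / 2) t := by
    have := (hasDerivAt_tan hcos).comp t ((hasDerivAt_id t).div_const 2)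
    rw [one_div, ← inv_one_add_tan_sq hcos, inv_inv] at this
    exact this.congr_deriv (div_eq_mul_one_div _ _).symm
  have hF := (((hu.const_add b).div_const c).arctan).const_mul (2 / c)
  refine hF.congr_deriv ?_
  rw [sin_eq_two_mul_tan_half_div_one_add_tan_half_sq t]
  have hpos := one_add_mul_sin_pos hb t
  rw [sin_eq_two_mul_tan_half_div_one_add_tan_half_sq t] at hpos
  generalize tan (t / 2) = u at *
  have h2 : 0 < 1 + u ^ 2 + 2 * b * u := by
    have := mul_pos hpos (by positivity : (0 : ℝ) < 1 + u ^ 2)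
    field_simp at this
    linarith
  field_simp
  rw [hc2]
  ring

theorem integral_one_div_one_add_mul_sin :
    ∫ t in (-π)..π, 1 / (1 + b * sin t) = 2 * π / √(1 - b ^ 2) := by
  have hc := sqrt_one_sub_sq_pos hb
  rw [integral_eq_sub_of_hasDerivAt_of_tendsto (neg_lt_self pi_pos)
    (fa := 2 / √(1 - b ^ 2) * -(π / 2)) (fb := 2 / √(1 - b ^ 2) * (π / 2))
    (fun t ht => hasDerivAt_halfAngleAntideriv hb ht)
    ((continuous_div_one_add_mul_sin hb 1).intervalIntegrable _ _)]
  · ring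
  · exact ((tendsto_nhds_of_tendsto_nhdsWithin tendsto_arctan_atBot).comp
      ((tendsto_atBot_add_const_left _ b tendsto_tan_half_nhdsGT_neg_pi).atBot_div_const hc)
      ).const_mul _
  · exact ((tendsto_nhds_of_tendsto_nhdsWithin tendsto_arctan_atTop).comp
      ((tendsto_atTop_add_const_left _ b tendsto_tan_half_nhdsLT_pi).atTop_div_const hc)
      ).const_mul _

end HalfAngle

lemma integral_one_div_sin_two_pi_sub (x y : ℝ) :
    ∫ t in (2 * π - y)..(2 * π - x), 1 / sin t = -∫ t in x..y, 1 / sin t := by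
  rw [← integral_comp_sub_left (fun t => 1 / sin t), ← intervalIntegral.integral_neg]
  simp only [sin_two_pi_sub, one_div, inv_neg]

section MuFormula

variable {b : ℝ} (hb : |b| < 1)
include hb

theorem integral_div_one_add_mul_sin_zero_two_pi :
    ∫ t in 0..(2 * π), b / (1 + b * sin t) = 2 * π * b / √(1 - b ^ 2) := by
  have hper : Function.Periodic (fun t => 1 / (1 + b * sin t)) (2 * π) := fun t => by
    simp [sin_periodic t]
  have hshift := hper.intervalIntegral_add_eq (-π) 0
  rw [zero_add, show -π + 2 * π = π by ring] at hshift
  simp_rw [div_eq_mul_one_div b]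
  rw [intervalIntegral.integral_const_mul, ← hshift, integral_one_div_one_add_mul_sin hb]
  ring

lemma integral_one_div_sin_mul_one_add_mul_sin {x y : ℝ} (hsin : ∀ t ∈ uIcc x y, sin t ≠ 0) :
    ∫ t in x..y, 1 / (sin t * (1 + b * sin t)) =
      (∫ t in x..y, 1 / sin t) - ∫ t in x..y, b / (1 + b * sin t) := by
  have hcsc : ContinuousOn (fun t => 1 / sin t) (uIcc x y) :=
    continuousOn_const.div continuous_sin.continuousOn hsin
  rw [← integral_sub hcsc.intervalIntegrable
    ((continuous_div_one_add_mul_sin hb b).intervalIntegrable _ _)]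
  refine integral_congr fun t ht => ?_
  rw [div_sub_div _ _ (hsin t ht) (one_add_mul_sin_pos hb t).ne']
  ring

theorem tendsto_mu_of_f_b :
    Tendsto (fun ε => (∫ t in ε..(π - ε), 1 / (sin t * (1 + b * sin t))) +
        ∫ t in (π + ε)..(2 * π - ε), 1 / (sin t * (1 + b * sin t)))
      (𝓝[>] 0) (𝓝 (-(2 * π * b / √(1 - b ^ 2)))) := by
  have hg := continuous_div_one_add_mul_sin hb b
  have hlim :=
    ((tendsto_integral_add_sub hg 0 π).add (tendsto_integral_add_sub hg π (2 * π))).neg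
  rw [integral_add_adjacent_intervals (hg.intervalIntegrable _ _) (hg.intervalIntegrable _ _),
    integral_div_one_add_mul_sin_zero_two_pi hb] at hlim
  refine (hlim.mono_left nhdsWithin_le_nhds).congr' ?_
  filter_upwards [Ioo_mem_nhdsGT (half_pos pi_pos)] with ε ⟨hε0, hεπ⟩
  have hsin : ∀ t ∈ uIcc ε (π - ε), sin t ≠ 0 := by
    rw [uIcc_of_le (by linarith)]
    exact fun t ht => (sin_pos_of_pos_of_lt_pi (by linarith [ht.1]) (by linarith [ht.2])).ne'
  have hsin' : ∀ t ∈ uIcc (π + ε) (2 * π - ε), sin t ≠ 0 := by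
    rw [uIcc_of_le (by linarith)]
    intro t ht
    rw [← neg_ne_zero, ← sin_sub_pi]
    exact (sin_pos_of_pos_of_lt_pi (by linarith [ht.1]) (by linarith [ht.2])).ne'
  rw [zero_add, integral_one_div_sin_mul_one_add_mul_sin hb hsin,
    integral_one_div_sin_mul_one_add_mul_sin hb hsin', show π + ε = 2 * π - (π - ε) by ring,
    integral_one_div_sin_two_pi_sub]
  ring

end MuFormula

/-- For `f_b(t) = sin(t)·(1 + b·sin(t))`, the map `b ↦ μ(X_{f_b,2π})` is a surjection
from `(-1,1)` onto `ℝ`: for every `r ∈ ℝ` there is `b ∈ (-1,1)` such that the limit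
`lim_{ε→0⁺} (∫_ε^{π-ε} dt/f_b(t) + ∫_{π+ε}^{2π-ε} dt/f_b(t))` equals `r`. -/
theorem mu_of_f_b_surjective :
    ∀ r : ℝ, ∃ b : ℝ, b ∈ Ioo (-1 : ℝ) 1 ∧
      Tendsto
        (fun ε : ℝ =>
          (∫ t in ε..(π - ε), 1 / (Real.sin t * (1 + b * Real.sin t))) +
            ∫ t in (π + ε)..(2 * π - ε), 1 / (Real.sin t * (1 + b * Real.sin t)))
        (nhdsWithin 0 (Ioi 0)) (nhds r) := by
  intro r
  set q := √(4 * π ^ 2 + r ^ 2)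
  have hq2 : q ^ 2 = 4 * π ^ 2 + r ^ 2 := sq_sqrt (by positivity)
  have hq : |r| < q := abs_lt_of_sq_lt_sq (by nlinarith [pi_pos]) (sqrt_nonneg _)
  have hq0 : 0 < q := (abs_nonneg r).trans_lt hq
  have hb : |(-r / q)| < 1 := by
    rwa [abs_div, abs_neg, abs_of_pos hq0, div_lt_one hq0]
  have hc : √(1 - (-r / q) ^ 2) = 2 * π / q := by
    rw [show 1 - (-r / q) ^ 2 = (2 * π / q) ^ 2 by field_simp; linarith, sqrt_sq (by positivity)]
  refine ⟨-r / q, abs_lt.mp hb, ?_⟩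
  convert tendsto_mu_of_f_b hb using 2
  rw [hc]
  field_simp
end
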